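/- Let Q and Γ be types, let s ≥ 1, and let a deterministic single-tape Turing machine restricted to s tape cells be given by a transition function δ : Q → Γ → Q × Γ × D, where D = {left, stay, right}. A machine configuration is a triple (q, h, T) with q : Q, h : Fin s, T : Fin s → Γ; its successor configuration, defined whenever the head move keeps the head within Fin s, is (q', h', T') where (q', b, m) = δ q (T h), T' = Function.update T h b, and h' = h-1, h, or h+1 according as m = left, stay, or right. Define a cellular automaton with state set R = Option Q × Γ, encoding enc(q,h,T) : Fin s → R by i ↦ ((if i = h then some q else none), T i), and local rule r : Option R → R → Option R → R as follows: if the own state is (some q, a), let (q', b, m) = δ q a and output ((if m = stay then some q' else none), b); if the own state is (none, a), output (o, a) where o = some q' if the left neighbor exists and equals (some q, a_l) with δ q a_l = (q', b, right) for some b, or if the right neighbor exists and equals (some q, a_r) with δ q a_r = (q', b, left) for some b, and o = none otherwise. Then for every machine configuration (q,h,T) whose successor (q',h',T') is defined (the head stays within Fin s), applying one parallel step of the cellular automaton to enc(q,h,T) — i.e., each cell i is replaced by r applied to the encoded states of cells i-1 (or none if i = 0), i, and i+1 (or none if i = s-1) — yields exactly enc(q',h',T'). -/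

import Mathlib

/-- Head directions of a single-tape Turing machine. -/
inductive Dir : Type
  | left : Dir
  | stay : Dir
  | right : Dir

/-- The local rule of the cellular automaton simulating a space-bounded
deterministic single-tape Turing machine with transition function `δ`.
A cell state is a pair of an optional machine state (present iff the head is
on this cell) and a tape symbol; the neighbor arguments are `none` at the two
boundaries. -/
def tmCARule {Q Γ : Type*} (δ : Q → Γ → Q × Γ × Dir) :
    Option (Option Q × Γ) → (Option Q × Γ) → Option (Option Q × Γ) →
      (Option Q × Γ)
  | _, (some q, a), _ =>
      match δ q a with
      | (q', b, Dir.stay) => (some q', b)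
      | (_, b, _) => (none, b)
  | l, (none, a), r =>
      let fromLeft : Option Q :=
        match l with
        | some (some q, al) =>
            match δ q al with
            | (q', _, Dir.right) => some q'
            | _ => none
        | _ => none
      let fromRight : Option Q :=
        match r with
        | some (some q, ar) =>
            match δ q ar with
            | (q', _, Dir.left) => some q'
            | _ => none
        | _ => none
      (fromLeft.orElse fun _ => fromRight, a)

/-- Encoding of a machine configuration `(q, h, T)` as a string of cell
states: cell `i` holds `(some q, T i)` if `i = h` and `(none, T i)` otherwise. -/
def encTM {Q Γ : Type*} {s : ℕ} (q : Q) (h : Fin s) (T : Fin s → Γ) :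
    Fin s → Option Q × Γ :=
  fun i => ((if i = h then some q else none), T i)

/-- One parallel step of the cellular automaton: every cell is simultaneously
replaced by the local rule applied to the states of its left neighbor
(`none` if `i = 0`), itself, and its right neighbor (`none` if `i = s - 1`). -/
def tmCAStep {Q Γ : Type*} {s : ℕ} (δ : Q → Γ → Q × Γ × Dir)
    (e : Fin s → Option Q × Γ) : Fin s → Option Q × Γ :=
  fun i =>
    tmCARule δ
      (if h : 0 < (i : ℕ) then some (e ⟨(i : ℕ) - 1, by omega⟩) else none)
      (e i)
      (if h : (i : ℕ) + 1 < s then some (e ⟨(i : ℕ) + 1, h⟩) else none)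

/-!
Only the head cell and its two neighbours can change their state component. The head cell writes
its new symbol and keeps the new machine state iff the move is `stay`; a headless cell receives the
new state exactly when its left neighbour is the head moving right or its right neighbour is the
head moving left. No cell has the head on both sides, so at most one of the two sources fires.
-/

instance : DecidableEq Dir := fun a b => by
  cases a <;> cases b <;> first | exact isTrue rfl | exact isFalse Dir.noConfusion

def Dir.Moves {s : ℕ} : Dir → Fin s → Fin s → Prop
  | .left, h, h' => 0 < (h : ℕ) ∧ (h' : ℕ) = h - 1
  | .stay, h, h' => h' = h
  | .right, h, h' => (h : ℕ) + 1 < s ∧ (h' : ℕ) = h + 1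

namespace Dir.Moves

variable {s : ℕ} {m : Dir} {h h' : Fin s}

theorem eq_iff_eq_stay (hm : m.Moves h h') : h' = h ↔ m = .stay := by
  cases m <;> simp_all [Moves, Fin.ext_iff]
  omega

theorem eq_iff_of_ne {i : Fin s} (hm : m.Moves h h') (hi : i ≠ h) :
    i = h' ↔ m = .right ∧ (i : ℕ) = h + 1 ∨ m = .left ∧ (i : ℕ) + 1 = h := by
  rw [Ne, Fin.ext_iff] at hi
  cases m <;> simp_all [Moves, Fin.ext_iff]
  omega

end Dir.Moves

section Rule

variable {Q Γ : Type*} (δ : Q → Γ → Q × Γ × Dir) {q q' : Q} {a b : Γ} {m : Dir}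
  {l r : Option (Option Q × Γ)}

theorem tmCARule_some (hδ : δ q a = (q', b, m)) :
    tmCARule δ l (some q, a) r = (if m = .stay then some q' else none, b) := by
  cases m <;> simp [tmCARule, hδ]

theorem tmCARule_none_of_headless (hl : ∀ p ∈ l, p.1 = none) (hr : ∀ p ∈ r, p.1 = none) :
    tmCARule δ l (none, a) r = (none, a) := by
  rcases l with _ | ⟨_ | _, _⟩ <;> rcases r with _ | ⟨_ | _, _⟩ <;> simp_all [tmCARule]

theorem tmCARule_none_of_left {al : Γ} (hδ : δ q al = (q', b, m)) (hr : ∀ p ∈ r, p.1 = none) :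
    tmCARule δ (some (some q, al)) (none, a) r = (if m = .right then some q' else none, a) := by
  rcases r with _ | ⟨_ | _, _⟩ <;> cases m <;> simp_all [tmCARule]

theorem tmCARule_none_of_right {ar : Γ} (hδ : δ q ar = (q', b, m)) (hl : ∀ p ∈ l, p.1 = none) :
    tmCARule δ l (none, a) (some (some q, ar)) = (if m = .left then some q' else none, a) := by
  rcases l with _ | ⟨_ | _, _⟩ <;> cases m <;> simp_all [tmCARule]

end Rule

section Neighbors

variable {α : Type*} {s : ℕ} (e : Fin s → α)

def leftNeighbor (i : Fin s) : Option α :=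
  if h : 0 < (i : ℕ) then some (e ⟨(i : ℕ) - 1, by omega⟩) else none

def rightNeighbor (i : Fin s) : Option α :=
  if h : (i : ℕ) + 1 < s then some (e ⟨(i : ℕ) + 1, h⟩) else none

variable {e} {i j : Fin s} {p : α}

theorem leftNeighbor_of_eq_succ (hij : (i : ℕ) = j + 1) : leftNeighbor e i = some (e j) := by
  rw [leftNeighbor, dif_pos (by omega)]
  congr
  omega

theorem rightNeighbor_of_succ_eq (hij : (i : ℕ) + 1 = j) : rightNeighbor e i = some (e j) := by
  rw [rightNeighbor, dif_pos (by omega)]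
  congr

theorem exists_of_mem_leftNeighbor (hp : p ∈ leftNeighbor e i) :
    ∃ j : Fin s, (i : ℕ) = j + 1 ∧ p = e j := by
  unfold leftNeighbor at hp
  split_ifs at hp with hi
  · exact ⟨_, by simp only; omega, (Option.mem_some_iff.mp hp).symm⟩
  · simp at hp

theorem exists_of_mem_rightNeighbor (hp : p ∈ rightNeighbor e i) :
    ∃ j : Fin s, (i : ℕ) + 1 = j ∧ p = e j := by
  unfold rightNeighbor at hp
  split_ifs at hp with hi
  · exact ⟨_, rfl, (Option.mem_some_iff.mp hp).symm⟩
  · simp at hp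

theorem tmCAStep_apply {Q Γ : Type*} (δ : Q → Γ → Q × Γ × Dir) (e : Fin s → Option Q × Γ)
    (i : Fin s) : tmCAStep δ e i = tmCARule δ (leftNeighbor e i) (e i) (rightNeighbor e i) :=
  rfl

end Neighbors

section Encoding

variable {Q Γ : Type*} (δ : Q → Γ → Q × Γ × Dir) {s : ℕ} {q q' : Q} {h i : Fin s}
  {T : Fin s → Γ} {b : Γ} {m : Dir}

theorem encTM_self : encTM q h T h = (some q, T h) := by
  simp [encTM]

theorem encTM_of_ne (hi : i ≠ h) : encTM q h T i = (none, T i) := by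
  simp [encTM, hi]

theorem leftNeighbor_encTM_headless (hi : (i : ℕ) ≠ h + 1) :
    ∀ p ∈ leftNeighbor (encTM q h T) i, p.1 = none := by
  intro p hp
  obtain ⟨j, hij, rfl⟩ := exists_of_mem_leftNeighbor hp
  rw [encTM_of_ne (by rintro rfl; exact hi hij)]

theorem rightNeighbor_encTM_headless (hi : (i : ℕ) + 1 ≠ h) :
    ∀ p ∈ rightNeighbor (encTM q h T) i, p.1 = none := by
  intro p hp
  obtain ⟨j, hij, rfl⟩ := exists_of_mem_rightNeighbor hp
  rw [encTM_of_ne (by rintro rfl; exact hi hij)]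

theorem tmCAStep_encTM_self (hδ : δ q (T h) = (q', b, m)) :
    tmCAStep δ (encTM q h T) h = (if m = .stay then some q' else none, b) := by
  rw [tmCAStep_apply, encTM_self, tmCARule_some δ hδ]

theorem tmCAStep_encTM_of_ne (hδ : δ q (T h) = (q', b, m)) (hi : i ≠ h) :
    tmCAStep δ (encTM q h T) i =
      (if m = .right ∧ (i : ℕ) = h + 1 ∨ m = .left ∧ (i : ℕ) + 1 = h then some q' else none,
        T i) := by
  rw [Ne, Fin.ext_iff] at hi
  rw [tmCAStep_apply, encTM_of_ne (Fin.ne_of_val_ne hi)]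
  by_cases hl : (i : ℕ) = h + 1
  · rw [leftNeighbor_of_eq_succ hl, encTM_self,
      tmCARule_none_of_left δ hδ (rightNeighbor_encTM_headless (by omega))]
    have hr : (i : ℕ) + 1 ≠ h := by omega
    simp [eq_true hl, hr]
  by_cases hr : (i : ℕ) + 1 = h
  · rw [rightNeighbor_of_succ_eq hr, encTM_self,
      tmCARule_none_of_right δ hδ (leftNeighbor_encTM_headless hl)]
    simp [hl, eq_true hr]
  · rw [tmCARule_none_of_headless δ (leftNeighbor_encTM_headless hl)
      (rightNeighbor_encTM_headless hr)]
    simp [hl, hr]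

end Encoding

theorem tmCAStep_encTM {Q Γ : Type*} (s : ℕ)
    (δ : Q → Γ → Q × Γ × Dir)
    (q : Q) (h : Fin s) (T : Fin s → Γ)
    (q' : Q) (b : Γ) (m : Dir) (hδ : δ q (T h) = (q', b, m))
    (h' : Fin s)
    (hmove : match m with
      | Dir.left => 0 < (h : ℕ) ∧ (h' : ℕ) = (h : ℕ) - 1
      | Dir.stay => h' = h
      | Dir.right => (h : ℕ) + 1 < s ∧ (h' : ℕ) = (h : ℕ) + 1) :
    tmCAStep δ (encTM q h T) = encTM q' h' (Function.update T h b) := by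
  have hm : m.Moves h h' := by cases m <;> exact hmove
  funext i
  by_cases hi : i = h
  · subst hi
    simp only [tmCAStep_encTM_self δ hδ, encTM, Function.update_self, eq_comm (a := i),
      hm.eq_iff_eq_stay]
  · simp only [tmCAStep_encTM_of_ne δ hδ hi, encTM, Function.update_of_ne hi,
      hm.eq_iff_of_ne hi]
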